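/- arXiv:1312.0759 — 2 statements merged into one kernel-verified Lean document; each statement's English description precedes it below -/
import Mathlib

section
/- Let f : ℝ → ℝ be smooth and even, and write f(x) = f(0) + f₁ x² + ⋯ + f_{s-1} x^{2s-2} + φ(x) x^{2s} where f_i = f^{(2i)}(0)/(2i)! (Taylor expansion with remainder). Then for each k = 1,…,2s, the limit lim_{x→0} x^k φ^{(k)}(x) = 0. -/
open Filter

namespace TaylorAux

open Finset

noncomputable def dc (e : ℤ) (m : ℕ) : ℝ := ∏ i ∈ Finset.range m, ((e : ℝ) - i)

lemma dc_zero (e : ℤ) : dc e 0 = 1 := by simp [dc]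

lemma dc_succ (e : ℤ) (m : ℕ) : dc e (m + 1) = dc e m * ((e : ℝ) - m) := by
  simp [dc, Finset.prod_range_succ]

lemma contDiff_iteratedDeriv {g : ℝ → ℝ} (hg : ContDiff ℝ (⊤ : ℕ∞) g) (j : ℕ) :
    ContDiff ℝ (⊤ : ℕ∞) (iteratedDeriv j g) := by
  rw [iteratedDeriv_eq_iterate]; exact hg.iterate_deriv j

lemma iteratedDeriv_iteratedDeriv (g : ℝ → ℝ) (m j : ℕ) :
    iteratedDeriv m (iteratedDeriv j g) = iteratedDeriv (m + j) g := by
  simp only [iteratedDeriv_eq_iterate]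
  exact (Function.iterate_add_apply deriv m j g).symm

lemma hasDerivAt_iteratedDeriv {g : ℝ → ℝ} (hg : ContDiff ℝ (⊤ : ℕ∞) g) (j : ℕ) (x : ℝ) :
    HasDerivAt (iteratedDeriv j g) (iteratedDeriv (j + 1) g x) x := by
  have h := (((contDiff_iteratedDeriv hg j).differentiable (by simp)) x).hasDerivAt
  rwa [← iteratedDeriv_succ] at h

lemma leibniz_zpow {g : ℝ → ℝ} (hg : ContDiff ℝ (⊤ : ℕ∞) g) (e : ℤ) (k : ℕ) :
    ∀ x : ℝ, x ≠ 0 → iteratedDeriv k (fun y => g y * y ^ e) x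
      = ∑ j ∈ Finset.range (k + 1),
          (k.choose j : ℝ) * dc e (k - j) * iteratedDeriv j g x * x ^ (e + j - k) := by
  induction k with
  | zero => intro x hx; simp [dc]
  | succ k ih =>
    intro x hx
    rw [iteratedDeriv_succ]
    have hmem : {(0 : ℝ)}ᶜ ∈ nhds x := isOpen_compl_singleton.mem_nhds (by simpa using hx)
    have hev : iteratedDeriv k (fun y => g y * y ^ e)
        =ᶠ[nhds x] fun y => ∑ j ∈ Finset.range (k + 1),
          (k.choose j : ℝ) * dc e (k - j) * iteratedDeriv j g y * y ^ (e + j - k) := by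
      filter_upwards [hmem] with y hy
      exact ih y hy
    rw [hev.deriv_eq]
    have hterm : ∀ j ∈ Finset.range (k + 1), HasDerivAt
        (fun y : ℝ => (k.choose j : ℝ) * dc e (k - j) * iteratedDeriv j g y * y ^ (e + j - k))
        ((k.choose j : ℝ) * dc e (k - j) * iteratedDeriv (j + 1) g x * x ^ (e + j - k)
          + (k.choose j : ℝ) * dc e (k + 1 - j) * iteratedDeriv j g x * x ^ (e + j - k - 1)) x := by
      intro j hj
      have hj' : j ≤ k := Nat.lt_succ_iff.mp (Finset.mem_range.mp hj)
      have h1 := hasDerivAt_iteratedDeriv hg j x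
      have h2 := hasDerivAt_zpow (e + j - k) x (Or.inl hx)
      have h3 := (h1.fun_mul h2).const_mul ((k.choose j : ℝ) * dc e (k - j))
      simp only [← mul_assoc] at h3
      refine h3.congr_deriv ?_
      have h4 : dc e (k + 1 - j) = dc e (k - j) * ((e : ℝ) + j - k) := by
        rw [show k + 1 - j = (k - j) + 1 from by omega, dc_succ]
        congr 1
        rw [Nat.cast_sub hj']
        ring
      rw [h4]
      push_cast
      ring
    rw [HasDerivAt.deriv (HasDerivAt.fun_sum hterm)]
    rw [Finset.sum_add_distrib]
    rw [Finset.sum_range_succ' (fun j =>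
      ((k + 1).choose j : ℝ) * dc e (k + 1 - j) * iteratedDeriv j g x
        * x ^ (e + (j : ℤ) - ((k + 1 : ℕ) : ℤ))) (k + 1)]
    rw [Finset.sum_range_succ' (fun j =>
      (k.choose j : ℝ) * dc e (k + 1 - j) * iteratedDeriv j g x * x ^ (e + j - k - 1)) k]
    have hT0 : (k.choose 0 : ℝ) * dc e (k + 1 - 0) * iteratedDeriv 0 g x * x ^ (e + (0 : ℕ) - k - 1)
        = ((k + 1).choose 0 : ℝ) * dc e (k + 1 - 0) * iteratedDeriv 0 g x
          * x ^ (e + ((0 : ℕ) : ℤ) - ((k + 1 : ℕ) : ℤ)) := by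
      simp only [Nat.choose_zero_right, Nat.cast_one]
      congr 1
      push_cast
      ring
    have hmain : (∑ j ∈ Finset.range (k + 1),
          (k.choose j : ℝ) * dc e (k - j) * iteratedDeriv (j + 1) g x * x ^ (e + j - k))
        + ∑ j ∈ Finset.range k,
          (k.choose (j + 1) : ℝ) * dc e (k + 1 - (j + 1)) * iteratedDeriv (j + 1) g x * x ^ (e + (j + 1 : ℕ) - k - 1)
        = ∑ j ∈ Finset.range (k + 1),
          ((k + 1).choose (j + 1) : ℝ) * dc e (k + 1 - (j + 1)) * iteratedDeriv (j + 1) g x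
            * x ^ (e + ((j + 1 : ℕ) : ℤ) - ((k + 1 : ℕ) : ℤ)) := by
      have hext : ∑ j ∈ Finset.range k,
            (k.choose (j + 1) : ℝ) * dc e (k + 1 - (j + 1)) * iteratedDeriv (j + 1) g x * x ^ (e + (j + 1 : ℕ) - k - 1)
          = ∑ j ∈ Finset.range (k + 1),
            (k.choose (j + 1) : ℝ) * dc e (k + 1 - (j + 1)) * iteratedDeriv (j + 1) g x * x ^ (e + (j + 1 : ℕ) - k - 1) := by
        rw [Finset.sum_range_succ, Nat.choose_succ_self]
        simp
      rw [hext, ← Finset.sum_add_distrib]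
      refine Finset.sum_congr rfl fun j hj => ?_
      have hc : (((k + 1).choose (j + 1) : ℕ) : ℝ) = (k.choose j : ℝ) + (k.choose (j + 1) : ℝ) := by
        rw [Nat.choose_succ_succ]
        push_cast
        ring
      have hx1 : x ^ (e + (j + 1 : ℕ) - k - 1) = x ^ (e + j - k) := by
        congr 1; push_cast; ring
      have hx2 : x ^ (e + ((j + 1 : ℕ) : ℤ) - ((k + 1 : ℕ) : ℤ)) = x ^ (e + j - k) := by
        congr 1; push_cast; ring
      have hd : k + 1 - (j + 1) = k - j := by omega
      rw [hc, hx1, hx2, hd]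
      ring
    linear_combination hmain + hT0

lemma iteratedDeriv_zero_fun (m : ℕ) : iteratedDeriv m (fun _ : ℝ => (0 : ℝ)) = fun _ => (0 : ℝ) := by
  induction m with
  | zero => simp [iteratedDeriv_zero]
  | succ m ih =>
    rw [iteratedDeriv_succ', show deriv (fun _ : ℝ => (0 : ℝ)) = fun _ : ℝ => (0 : ℝ) from by
      funext y; simp, ih]

lemma iteratedDeriv_const_fun (m : ℕ) (c : ℝ) (hm : m ≠ 0) :
    iteratedDeriv m (fun _ : ℝ => c) = fun _ => (0 : ℝ) := by
  obtain ⟨m', rfl⟩ : ∃ m', m = m' + 1 := ⟨m - 1, by omega⟩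
  rw [iteratedDeriv_succ', show deriv (fun _ : ℝ => c) = fun _ : ℝ => (0 : ℝ) from by
    funext y; simp, iteratedDeriv_zero_fun]

lemma iteratedDeriv_add' {f g : ℝ → ℝ} (hf : ContDiff ℝ (⊤ : ℕ∞) f) (hg : ContDiff ℝ (⊤ : ℕ∞) g)
    (m : ℕ) (x : ℝ) :
    iteratedDeriv m (fun y => f y + g y) x = iteratedDeriv m f x + iteratedDeriv m g x := by
  rw [← iteratedDerivWithin_univ, ← iteratedDerivWithin_univ, ← iteratedDerivWithin_univ]
  have := iteratedDerivWithin_add (Set.mem_univ x) uniqueDiffOn_univ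
    (f := f) (g := g) (hf.of_le (by exact_mod_cast (le_top : (m : ℕ∞) ≤ ⊤))).contDiffWithinAt
    (hg.of_le (by exact_mod_cast (le_top : (m : ℕ∞) ≤ ⊤))).contDiffWithinAt (n := m)
  simpa [Pi.add_def] using this

lemma iteratedDeriv_sub' {f g : ℝ → ℝ} (hf : ContDiff ℝ (⊤ : ℕ∞) f) (hg : ContDiff ℝ (⊤ : ℕ∞) g)
    (m : ℕ) (x : ℝ) :
    iteratedDeriv m (fun y => f y - g y) x = iteratedDeriv m f x - iteratedDeriv m g x := by
  rw [← iteratedDerivWithin_univ, ← iteratedDerivWithin_univ, ← iteratedDerivWithin_univ]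
  have := iteratedDerivWithin_sub (Set.mem_univ x) uniqueDiffOn_univ
    (f := f) (g := g) (hf.of_le (by exact_mod_cast (le_top : (m : ℕ∞) ≤ ⊤))).contDiffWithinAt
    (hg.of_le (by exact_mod_cast (le_top : (m : ℕ∞) ≤ ⊤))).contDiffWithinAt (n := m)
  simpa [Pi.sub_def] using this

lemma iteratedDeriv_finset_sum {ι : Type*} (t : Finset ι) (F : ι → ℝ → ℝ)
    (hF : ∀ i ∈ t, ContDiff ℝ (⊤ : ℕ∞) (F i)) (m : ℕ) (x : ℝ) :
    iteratedDeriv m (fun y => ∑ i ∈ t, F i y) x = ∑ i ∈ t, iteratedDeriv m (F i) x := by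
  classical
  induction t using Finset.induction with
  | empty => simp [iteratedDeriv_zero_fun]
  | insert a t hni ih =>
    have h1 : ContDiff ℝ (⊤ : ℕ∞) (fun y => ∑ i ∈ t, F i y) :=
      ContDiff.sum fun i hi => hF i (Finset.mem_insert_of_mem hi)
    rw [Finset.sum_insert hni,
      show (fun y => ∑ i ∈ insert a t, F i y) = fun y => F a y + ∑ i ∈ t, F i y from by
        funext y; rw [Finset.sum_insert hni],
      iteratedDeriv_add' (hF a (Finset.mem_insert_self a t)) h1,
      ih fun i hi => hF i (Finset.mem_insert_of_mem hi)]

lemma const_mul_iteratedDeriv (c : ℝ) {f : ℝ → ℝ} (hf : ContDiff ℝ (⊤ : ℕ∞) f) (m : ℕ) (x : ℝ) :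
    iteratedDeriv m (fun y => c * f y) x = c * iteratedDeriv m f x := by
  rw [← iteratedDerivWithin_univ, ← iteratedDerivWithin_univ]
  exact iteratedDerivWithin_const_mul (Set.mem_univ x) uniqueDiffOn_univ c
    (hf.of_le (by exact_mod_cast (le_top : (m : ℕ∞) ≤ ⊤))).contDiffWithinAt

lemma prod_range_cast_sub (n j : ℕ) (h : j ≤ n) :
    (∏ t ∈ Finset.range j, ((n : ℝ) - t)) = (n.descFactorial j : ℝ) := by
  rw [Nat.descFactorial_eq_prod_range, Nat.cast_prod]
  refine Finset.prod_congr rfl fun t ht => ?_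
  rw [Nat.cast_sub (le_of_lt (lt_of_lt_of_le (Finset.mem_range.mp ht) h))]

lemma monomial_iteratedDeriv_zero (c : ℝ) (p m : ℕ) :
    iteratedDeriv m (fun x : ℝ => c * x ^ p) 0 = if p = m then c * (p.factorial : ℝ) else 0 := by
  have hmul : iteratedDeriv m (fun x : ℝ => c * x ^ p) 0
      = c * iteratedDeriv m (fun x : ℝ => x ^ p) 0 :=
    const_mul_iteratedDeriv c (contDiff_id.pow p) m 0
  rw [hmul, iteratedDeriv_eq_iterate, iter_deriv_pow]
  rcases eq_or_ne p m with rfl | hne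
  · rw [prod_range_cast_sub p p le_rfl, Nat.descFactorial_self, Nat.sub_self, pow_zero]
    simp
  · rcases lt_or_gt_of_ne hne with hlt | hgt
    · rw [Finset.prod_eq_zero (Finset.mem_range.mpr hlt) (by simp)]
      simp [hne]
    · rw [zero_pow (by omega : p - m ≠ 0)]
      simp [hne]

lemma tendsto_div_pow (n : ℕ) :
    ∀ g : ℝ → ℝ, ContDiff ℝ (⊤ : ℕ∞) g → (∀ m, m < n → iteratedDeriv m g 0 = 0) →
    Tendsto (fun x => g x / x ^ n) (nhdsWithin 0 {(0 : ℝ)}ᶜ)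
      (nhds (iteratedDeriv n g 0 / (Nat.factorial n : ℝ))) := by
  induction n with
  | zero =>
    intro g hg _
    simpa using ((hg.continuous.tendsto 0).mono_left nhdsWithin_le_nhds)
  | succ n ih =>
    intro g hg h0
    have hg0 : g 0 = 0 := by
      have := h0 0 (Nat.succ_pos n)
      rwa [iteratedDeriv_zero] at this
    have hdg : ContDiff ℝ (⊤ : ℕ∞) (deriv g) := by
      have := contDiff_iteratedDeriv hg 1
      rwa [iteratedDeriv_one] at this
    have hIH := ih (deriv g) hdg (fun m hm => by
      have h := h0 (m + 1) (by omega)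
      rwa [iteratedDeriv_succ'] at h)
    have hval : iteratedDeriv n (deriv g) 0 = iteratedDeriv (n + 1) g 0 :=
      (iteratedDeriv_succ' (n := n) (f := g)) ▸ rfl
    apply HasDerivAt.lhopital_zero_nhdsNE (f' := deriv g) (g' := fun x => ((n : ℝ) + 1) * x ^ n)
    · exact Eventually.of_forall fun x =>
        (((hg.differentiable (by simp)) x).hasDerivAt)
    · exact Eventually.of_forall fun x => by simpa using hasDerivAt_pow (n + 1) x
    · filter_upwards [self_mem_nhdsWithin] with x hx
      have hx' : x ≠ 0 := hx
      exact mul_ne_zero (by positivity) (pow_ne_zero _ hx')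
    · have := hg.continuous.tendsto 0
      rw [hg0] at this
      exact this.mono_left nhdsWithin_le_nhds
    · have h1 : Tendsto (fun x : ℝ => x ^ (n + 1)) (nhds 0) (nhds 0) := by
        simpa using (continuous_pow (n + 1)).tendsto (0 : ℝ)
      exact h1.mono_left nhdsWithin_le_nhds
    · have h2 := hIH.div_const ((n : ℝ) + 1)
      have hfe : (fun x => deriv g x / x ^ n / ((n : ℝ) + 1))
          = fun x => deriv g x / (((n : ℝ) + 1) * x ^ n) := by
        funext x; rw [div_div, mul_comm]
      have hve : iteratedDeriv n (deriv g) 0 / (n.factorial : ℝ) / ((n : ℝ) + 1)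
          = iteratedDeriv (n + 1) g 0 / ((n + 1).factorial : ℝ) := by
        rw [hval, div_div, Nat.factorial_succ]
        push_cast
        ring_nf
      rwa [hfe, hve] at h2

lemma tendsto_iteratedDeriv_mul_zpow {g : ℝ → ℝ} (hg : ContDiff ℝ (⊤ : ℕ∞) g) (N j : ℕ)
    (h0 : ∀ m, m < N → iteratedDeriv m g 0 = 0) (hj : j ≤ N) :
    Tendsto (fun x => iteratedDeriv j g x * x ^ ((j : ℤ) - N)) (nhdsWithin 0 {(0 : ℝ)}ᶜ)
      (nhds (iteratedDeriv N g 0 / (Nat.factorial (N - j) : ℝ))) := by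
  have hA := tendsto_div_pow (N - j) (iteratedDeriv j g) (contDiff_iteratedDeriv hg j)
    (fun m hm => by
      rw [iteratedDeriv_iteratedDeriv]
      exact h0 (m + j) (by omega))
  rw [iteratedDeriv_iteratedDeriv, Nat.sub_add_cancel hj] at hA
  refine hA.congr' ?_
  filter_upwards [self_mem_nhdsWithin] with x hx
  have hx' : (x : ℝ) ≠ 0 := hx
  rw [div_eq_mul_inv, ← zpow_natCast x (N - j), ← zpow_neg]
  congr 1
  push_cast [Nat.cast_sub hj]
  ring

end TaylorAux

open TaylorAux Finset in
/-- For a smooth even function `f`, the Taylor remainder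
`φ(x) = (f(x) - Σ_{i<s} f^{(2i)}(0)/(2i)! · x^{2i}) / x^{2s}` satisfies
`x^k φ^{(k)}(x) → 0` as `x → 0`, for each `k = 1, …, 2s`. -/
theorem taylor_remainder_even (f : ℝ → ℝ) (hf : ContDiff ℝ (⊤ : ℕ∞) f)
    (heven : ∀ x : ℝ, f (-x) = f x) (s : ℕ) (hs : 1 ≤ s)
    (φ : ℝ → ℝ)
    (hφ : ∀ x : ℝ, x ≠ 0 →
      φ x = (f x - ∑ i ∈ Finset.range s,
        (iteratedDeriv (2 * i) f 0 / (Nat.factorial (2 * i) : ℝ)) * x ^ (2 * i)) / x ^ (2 * s)) :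
    ∀ k : ℕ, 1 ≤ k → k ≤ 2 * s →
      Tendsto (fun x : ℝ => x ^ k * iteratedDeriv k φ x) (nhdsWithin 0 {(0 : ℝ)}ᶜ) (nhds 0) := by
  intro k hk1 hk2
  have hf' : ContDiff ℝ (⊤ : ℕ∞) f := hf.of_le (by simp)
  set n : ℕ := 2 * s with hn
  set P : ℝ → ℝ := fun x => ∑ i ∈ Finset.range s,
    (iteratedDeriv (2 * i) f 0 / (Nat.factorial (2 * i) : ℝ)) * x ^ (2 * i) with hPdef
  set g : ℝ → ℝ := fun x => f x - P x with hgdef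
  have hPsmooth : ContDiff ℝ (⊤ : ℕ∞) P :=
    ContDiff.sum fun i _ => contDiff_const.mul (contDiff_id.pow _)
  have hgsmooth : ContDiff ℝ (⊤ : ℕ∞) g := hf'.sub hPsmooth
  -- odd derivatives of f vanish at 0
  have hodd : ∀ m : ℕ, m % 2 = 1 → iteratedDeriv m f 0 = 0 := by
    intro m hm
    have h := iteratedDeriv_comp_neg m f 0
    rw [show (fun x : ℝ => f (-x)) = f from funext heven, neg_zero] at h
    have hneg : (-1 : ℝ) ^ m = -1 := Odd.neg_one_pow ⟨m / 2, by omega⟩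
    rw [hneg, smul_eq_mul] at h
    linarith
  -- derivatives of g vanish at 0 below order n
  have hg0 : ∀ m, m < n → iteratedDeriv m g 0 = 0 := by
    intro m hm
    have hsub : iteratedDeriv m g 0 = iteratedDeriv m f 0 - iteratedDeriv m P 0 :=
      iteratedDeriv_sub' hf' hPsmooth m 0
    have hPm : iteratedDeriv m P 0 = ∑ i ∈ Finset.range s,
        iteratedDeriv m (fun x => (iteratedDeriv (2 * i) f 0 / (Nat.factorial (2 * i) : ℝ)) * x ^ (2 * i)) 0 :=
      iteratedDeriv_finset_sum _ _ (fun i _ => contDiff_const.mul (contDiff_id.pow _)) m 0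
    simp only [monomial_iteratedDeriv_zero] at hPm
    rcases Nat.even_or_odd m with he | ho
    · have he2 : m % 2 = 0 := Nat.even_iff.mp he
      obtain ⟨i0, rfl⟩ : ∃ i0, m = 2 * i0 := ⟨m / 2, by omega⟩
      have hi0 : i0 ∈ Finset.range s := Finset.mem_range.mpr (by omega)
      rw [Finset.sum_eq_single i0 (fun i _ hne => by
        rw [if_neg (by omega)]) (fun h => absurd hi0 h)] at hPm
      rw [if_pos rfl] at hPm
      rw [hsub, hPm]
      have hfac : ((2 * i0).factorial : ℝ) ≠ 0 := Nat.cast_ne_zero.mpr (Nat.factorial_ne_zero _)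
      field_simp
      ring
    · rw [hsub, hodd m (Nat.odd_iff.mp ho)]
      rw [Finset.sum_eq_zero (fun i _ => by rw [if_neg (by have := Nat.odd_iff.mp ho; omega)])] at hPm
      rw [hPm]
      ring
  set e : ℤ := -(n : ℤ) with hedef
  -- φ agrees with g * zpow away from 0
  have hφev : ∀ x : ℝ, x ≠ 0 → iteratedDeriv k φ x
      = iteratedDeriv k (fun y => g y * y ^ e) x := by
    intro x hx
    apply Filter.EventuallyEq.iteratedDeriv_eq
    filter_upwards [isOpen_compl_singleton.mem_nhds
      (show x ∈ ({(0 : ℝ)}ᶜ : Set ℝ) by simpa using hx)] with y hy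
    have hy' : (y : ℝ) ≠ 0 := by simpa using hy
    rw [hφ y hy', hgdef]
    rw [div_eq_mul_inv, ← zpow_natCast y n, ← zpow_neg]
  -- the Leibniz expansion of x^k * φ^{(k)}
  have hsum : ∀ x : ℝ, x ≠ 0 → x ^ k * iteratedDeriv k φ x
      = ∑ j ∈ Finset.range (k + 1),
          (k.choose j : ℝ) * dc e (k - j) * (iteratedDeriv j g x * x ^ ((j : ℤ) - n)) := by
    intro x hx
    rw [hφev x hx, leibniz_zpow hgsmooth e k x hx, Finset.mul_sum]
    refine Finset.sum_congr rfl fun j hj => ?_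
    have hxp : x ^ k * x ^ (e + j - k) = x ^ ((j : ℤ) - n) := by
      rw [← zpow_natCast x k, ← zpow_add₀ hx]
      congr 1
      rw [hedef]
      push_cast
      ring
    linear_combination ((k.choose j : ℝ) * dc e (k - j) * iteratedDeriv j g x) * hxp
  -- limits of the individual terms
  have hterm : ∀ j ∈ Finset.range (k + 1),
      Tendsto (fun x => (k.choose j : ℝ) * dc e (k - j) * (iteratedDeriv j g x * x ^ ((j : ℤ) - n)))
        (nhdsWithin 0 {(0 : ℝ)}ᶜ)
        (nhds ((k.choose j : ℝ) * dc e (k - j) * (iteratedDeriv n g 0 / (Nat.factorial (n - j) : ℝ)))) := by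
    intro j hj
    have hjn : j ≤ n := le_trans (Nat.lt_succ_iff.mp (Finset.mem_range.mp hj)) hk2
    exact (tendsto_iteratedDeriv_mul_zpow hgsmooth n j hg0 hjn).const_mul _
  have hlim := tendsto_finset_sum _ hterm
  -- the combinatorial identity: the limit is 0
  have hDpow : ∀ j : ℕ, iteratedDeriv j (fun x : ℝ => x ^ n) 1 = (n.descFactorial j : ℝ) := by
    intro j
    rw [iteratedDeriv_eq_iterate, iter_deriv_pow, one_pow, mul_one]
    rcases le_or_gt j n with h | h
    · exact prod_range_cast_sub n j h
    · rw [Finset.prod_eq_zero (Finset.mem_range.mpr h) (by simp),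
        Nat.descFactorial_eq_zero_iff_lt.mpr h]
      simp
  have hL := leibniz_zpow (g := fun x : ℝ => x ^ n) (contDiff_id.pow n) e k 1 one_ne_zero
  have hconst : iteratedDeriv k (fun y : ℝ => y ^ n * y ^ e) 1 = 0 := by
    have heq : iteratedDeriv k (fun y : ℝ => y ^ n * y ^ e) 1
        = iteratedDeriv k (fun _ : ℝ => (1 : ℝ)) 1 := by
      apply Filter.EventuallyEq.iteratedDeriv_eq
      filter_upwards [isOpen_compl_singleton.mem_nhds
        (show (1 : ℝ) ∈ ({(0 : ℝ)}ᶜ : Set ℝ) by norm_num)] with y hy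
      have hy' : (y : ℝ) ≠ 0 := by simpa using hy
      rw [← zpow_natCast y n, ← zpow_add₀ hy', hedef, add_neg_cancel, zpow_zero]
    rw [heq, iteratedDeriv_const_fun k 1 (by omega)]
  simp only [hDpow, one_zpow, mul_one] at hL
  have hzero : ∑ j ∈ Finset.range (k + 1),
      (k.choose j : ℝ) * dc e (k - j) * (n.descFactorial j : ℝ) = 0 := hL.symm.trans hconst
  have hid : ∑ j ∈ Finset.range (k + 1),
      (k.choose j : ℝ) * dc e (k - j) * (iteratedDeriv n g 0 / (Nat.factorial (n - j) : ℝ)) = 0 := by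
    have hnfac : (n.factorial : ℝ) ≠ 0 := Nat.cast_ne_zero.mpr (Nat.factorial_ne_zero _)
    have hfacj : ∀ j ∈ Finset.range (k + 1),
        (k.choose j : ℝ) * dc e (k - j) * (iteratedDeriv n g 0 / (Nat.factorial (n - j) : ℝ))
        = (k.choose j : ℝ) * dc e (k - j) * (n.descFactorial j : ℝ)
          * (iteratedDeriv n g 0 / (n.factorial : ℝ)) := by
      intro j hj
      have hjn : j ≤ n := le_trans (Nat.lt_succ_iff.mp (Finset.mem_range.mp hj)) hk2
      have hkey : ((Nat.factorial (n - j) : ℕ) : ℝ) * (n.descFactorial j : ℝ) = (n.factorial : ℝ) := by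
        exact_mod_cast congrArg (Nat.cast : ℕ → ℝ) (Nat.factorial_mul_descFactorial hjn)
      have hfj : ((Nat.factorial (n - j) : ℕ) : ℝ) ≠ 0 := Nat.cast_ne_zero.mpr (Nat.factorial_ne_zero _)
      have h5 : iteratedDeriv n g 0 / ((Nat.factorial (n - j) : ℕ) : ℝ)
          = (n.descFactorial j : ℝ) * iteratedDeriv n g 0 / (n.factorial : ℝ) := by
        rw [div_eq_div_iff hfj hnfac]
        linear_combination (-(iteratedDeriv n g 0)) * hkey
      rw [h5]
      ring
    rw [Finset.sum_congr rfl hfacj, ← Finset.sum_mul, hzero, zero_mul]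
  rw [hid] at hlim
  refine hlim.congr' ?_
  filter_upwards [self_mem_nhdsWithin] with x hx
  exact (hsum x hx).symm
end

section
/- Let f : T^n → ℝ be Lipschitz continuous on the n-torus and let ω ∈ ℝ^n be non-resonant, i.e. ω·s ≠ 0 for every nonzero integer vector s ∈ ℤ^n. Then for every δ > 0 there exists T₀ > 0 such that for all T ≥ T₀, all continuous g : T^n → ℝ with sup |g - f| ≤ δ/3, and all x₀ ∈ T^n, one has |(1/T) ∫₀^T g(x₀ + ωt) dt - ∫_{T^n} g dμ| ≤ δ, where μ is the normalized Haar measure on T^n. -/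
/-!
A continuous function on the torus is a uniform limit of trigonometric polynomials
(Stone–Weierstrass). For a character `x ↦ e^{2πi s·x}` with `s ≠ 0` the time average along
`x₀ + ωt` is `e^{2πi s·x₀}` times the average of `e^{2πi (s·ω) t}` over `[0, T]`, which is
`O(1 / (|s·ω| T))` uniformly in `x₀` because `s·ω ≠ 0`; its space average is `0`. Time and space
averages are both `1`-Lipschitz in the sup norm, so the functions whose time averages converge
uniformly to their space average form a closed subspace; containing all characters, it is
everything. The perturbation `g` costs `δ/3` in the time average and `δ/3` in the space average.
-/

open MeasureTheory Filter

instance : IsProbabilityMeasure (volume : Measure (AddCircle (1:ℝ))) :=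
  ⟨by rw [AddCircle.measure_univ]; norm_num⟩

noncomputable section

open Complex Real UnitAddTorus

section Integrals

variable {E : Type*} [NormedAddCommGroup E]

theorem Continuous.integrable_of_compactSpace {X : Type*} [TopologicalSpace X] [CompactSpace X]
    [MeasurableSpace X] [OpensMeasurableSpace X] {μ : Measure X} [IsFiniteMeasure μ] {f : X → E}
    (hf : Continuous f) : Integrable f μ :=
  hf.integrable_of_hasCompactSupport (.of_compactSpace f)

variable [NormedSpace ℝ E]

theorem dist_integral_le_of_forall_dist_le {α : Type*} [MeasurableSpace α] {μ : Measure α}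
    [IsProbabilityMeasure μ] {f g : α → E} {C : ℝ} (hf : Integrable f μ) (hg : Integrable g μ)
    (h : ∀ x, dist (f x) (g x) ≤ C) : dist (∫ x, f x ∂μ) (∫ x, g x ∂μ) ≤ C := by
  rw [dist_eq_norm, ← integral_sub hf hg]
  simpa using norm_integral_le_of_norm_le_const (μ := μ) (ae_of_all _ fun x => by
    rw [← dist_eq_norm]; exact h x)

end Integrals

theorem integral_fourier_of_ne_zero {T : ℝ} [Fact (0 < T)] {k : ℤ} (hk : k ≠ 0) :
    ∫ x : AddCircle T, fourier k x = 0 :=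
  integral_eq_zero_of_add_right_eq_neg (fourier_add_half_inv_index hk Fact.out)

theorem norm_integral_exp_mul_I_le {a : ℝ} (ha : a ≠ 0) (T : ℝ) :
    ‖∫ t in (0:ℝ)..T, exp (a * I * t)‖ ≤ 2 / |a| := by
  have hc : (a * I : ℂ) ≠ 0 := mul_ne_zero (ofReal_ne_zero.mpr ha) I_ne_zero
  have h_norm_exp : ∀ t : ℝ, ‖exp (a * I * t)‖ = 1 := fun t => by
    rw [mul_right_comm, ← ofReal_mul, norm_exp_ofReal_mul_I]
  rw [integral_exp_mul_complex hc, norm_div, norm_mul, norm_I, mul_one, norm_real,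
    Real.norm_eq_abs]
  gcongr
  calc ‖exp (a * I * T) - exp (a * I * (0:ℝ))‖
      ≤ ‖exp (a * I * T)‖ + ‖exp (a * I * (0:ℝ))‖ := norm_sub_le _ _
    _ = 2 := by rw [h_norm_exp, h_norm_exp]; norm_num

variable {d : Type*}

def kroneckerFlow (ω : d → ℝ) (x₀ : UnitAddTorus d) (t : ℝ) : UnitAddTorus d :=
  fun i => x₀ i + ((ω i * t : ℝ) : UnitAddCircle)

theorem continuous_kroneckerFlow (ω : d → ℝ) (x₀ : UnitAddTorus d) :
    Continuous (kroneckerFlow ω x₀) := by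
  unfold kroneckerFlow
  fun_prop

section FlowAverage

variable {E : Type*} [NormedAddCommGroup E]

theorem intervalIntegrable_comp_kroneckerFlow {ω : d → ℝ} {F : UnitAddTorus d → E}
    (hF : Continuous F) (x₀ : UnitAddTorus d) (a b : ℝ) :
    IntervalIntegrable (fun t => F (kroneckerFlow ω x₀ t)) volume a b :=
  (hF.comp (continuous_kroneckerFlow ω x₀)).intervalIntegrable a b

variable [NormedSpace ℝ E]

def flowAverage (ω : d → ℝ) (F : UnitAddTorus d → E) (T : ℝ) (x₀ : UnitAddTorus d) : E :=
  T⁻¹ • ∫ t in (0:ℝ)..T, F (kroneckerFlow ω x₀ t)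

variable {ω : d → ℝ} {F G : UnitAddTorus d → E}

theorem flowAverage_add (hF : Continuous F) (hG : Continuous G) :
    flowAverage ω (F + G) = flowAverage ω F + flowAverage ω G := by
  ext T x₀
  simp only [flowAverage, Pi.add_apply, ← smul_add]
  rw [intervalIntegral.integral_add (intervalIntegrable_comp_kroneckerFlow hF x₀ 0 T)
    (intervalIntegrable_comp_kroneckerFlow hG x₀ 0 T)]

theorem flowAverage_const_smul {𝕜 : Type*} [NontriviallyNormedField 𝕜] [NormedSpace 𝕜 E]
    [SMulCommClass ℝ 𝕜 E] (c : 𝕜) (F : UnitAddTorus d → E) :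
    flowAverage ω (c • F) = c • flowAverage ω F := by
  ext T x₀
  simp only [flowAverage, Pi.smul_apply, intervalIntegral.integral_smul]
  exact smul_comm _ _ _

theorem dist_flowAverage_le (hF : Continuous F) (hG : Continuous G) {C : ℝ}
    (h : ∀ x, dist (F x) (G x) ≤ C) (T : ℝ) (x₀ : UnitAddTorus d) :
    dist (flowAverage ω F T x₀) (flowAverage ω G T x₀) ≤ C := by
  have hC : 0 ≤ C := dist_nonneg.trans (h x₀)
  rw [dist_eq_norm, flowAverage, flowAverage, ← smul_sub,
    ← intervalIntegral.integral_sub (intervalIntegrable_comp_kroneckerFlow hF x₀ 0 T)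
      (intervalIntegrable_comp_kroneckerFlow hG x₀ 0 T), norm_smul, norm_inv, Real.norm_eq_abs]
  have h_int : ‖∫ t in (0:ℝ)..T, (F (kroneckerFlow ω x₀ t) - G (kroneckerFlow ω x₀ t))‖
      ≤ C * |T - 0| :=
    intervalIntegral.norm_integral_le_of_norm_le_const fun t _ => by
      rw [← dist_eq_norm]; exact h _
  rcases eq_or_ne T 0 with rfl | hT
  · simpa using hC
  · calc |T|⁻¹ * ‖∫ t in (0:ℝ)..T, (F (kroneckerFlow ω x₀ t) - G (kroneckerFlow ω x₀ t))‖
        ≤ |T|⁻¹ * (C * |T - 0|) := by gcongr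
      _ = C := by rw [sub_zero]; field_simp

theorem flowAverage_ofReal (ω : d → ℝ) (f : UnitAddTorus d → ℝ) (T : ℝ) (x₀ : UnitAddTorus d) :
    flowAverage ω (fun x => (f x : ℂ)) T x₀ = flowAverage ω f T x₀ := by
  simp [flowAverage, intervalIntegral.integral_ofReal]

end FlowAverage

section Torus

variable [Fintype d]

def Nonresonant (ω : d → ℝ) : Prop :=
  ∀ s : d → ℤ, s ≠ 0 → ∑ i, (s i : ℝ) * ω i ≠ 0

theorem integral_mFourier_of_ne_zero {s : d → ℤ} (hs : s ≠ 0) : ∫ x, mFourier s x = 0 := by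
  obtain ⟨i, hi⟩ := Function.ne_iff.mp hs
  rw [mFourier, ContinuousMap.coe_mk, integral_fintype_prod_volume_eq_prod]
  exact Finset.prod_eq_zero (Finset.mem_univ i) (integral_fourier_of_ne_zero hi)

theorem mFourier_kroneckerFlow (s : d → ℤ) (ω : d → ℝ) (x₀ : UnitAddTorus d) (t : ℝ) :
    mFourier s (kroneckerFlow ω x₀ t)
      = mFourier s x₀ * exp ((2 * π * ∑ i, (s i : ℝ) * ω i : ℝ) * I * t) := by
  have h_coord : ∀ i, fourier (s i) (kroneckerFlow ω x₀ t i)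
      = fourier (s i) (x₀ i) * exp (2 * π * I * s i * (ω i * t : ℝ)) := fun i => by
    rw [kroneckerFlow, fourier_apply, zsmul_add, AddCircle.toCircle_add, Circle.coe_mul,
      ← fourier_apply, ← fourier_apply, fourier_coe_apply, ofReal_one, div_one]
  simp only [mFourier, ContinuousMap.coe_mk, h_coord, Finset.prod_mul_distrib, ← Complex.exp_sum]
  congr 2
  push_cast
  rw [Finset.mul_sum, Finset.sum_mul, Finset.sum_mul]
  exact Finset.sum_congr rfl fun i _ => by ring

def equidistributedSubmodule (ω : d → ℝ) : Submodule ℂ C(UnitAddTorus d, ℂ) where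
  carrier := {F | TendstoUniformly (flowAverage ω F) (fun _ => ∫ x, F x) atTop}
  zero_mem' _ hu := .of_forall fun _ _ => by simpa [flowAverage] using refl_mem_uniformity hu
  add_mem' {F G} hF hG := by
    show TendstoUniformly _ _ _
    convert hF.add hG using 1
    · simp [flowAverage_add F.continuous G.continuous]
    · ext
      exact integral_add F.continuous.integrable_of_compactSpace
        G.continuous.integrable_of_compactSpace
  smul_mem' c F hF := by
    show TendstoUniformly _ _ _
    convert (uniformContinuous_const_smul c).comp_tendstoUniformly hF using 1
    · rw [ContinuousMap.coe_smul, flowAverage_const_smul]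
      rfl
    · ext
      exact integral_const_mul c _

theorem isClosed_equidistributedSubmodule (ω : d → ℝ) :
    IsClosed (equidistributedSubmodule ω : Set C(UnitAddTorus d, ℂ)) := by
  refine isClosed_of_closure_subset fun F hF => Metric.tendstoUniformly_iff.mpr fun ε hε => ?_
  obtain ⟨G, hG, hFG⟩ := Metric.mem_closure_iff.mp hF (ε / 3) (by positivity)
  have h_pt (x : UnitAddTorus d) : dist (F x) (G x) ≤ dist F G :=
    ContinuousMap.dist_apply_le_dist x
  have h_mean := dist_integral_le_of_forall_dist_le (μ := volume)
    F.continuous.integrable_of_compactSpace G.continuous.integrable_of_compactSpace h_pt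
  filter_upwards [Metric.tendstoUniformly_iff.mp hG (ε / 3) (by positivity)] with T hT x₀
  have h_avg := dist_flowAverage_le (ω := ω) G.continuous F.continuous
    (fun x => dist_comm (F x) (G x) ▸ h_pt x) T x₀
  calc dist (∫ x, F x) (flowAverage ω F T x₀)
      ≤ dist (∫ x, F x) (∫ x, G x) + dist (∫ x, G x) (flowAverage ω G T x₀)
        + dist (flowAverage ω G T x₀) (flowAverage ω F T x₀) := dist_triangle4 _ _ _ _
    _ < ε := by linarith [hT x₀]

theorem norm_flowAverage_mFourier_le {ω : d → ℝ} {s : d → ℤ}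
    (hs : ∑ i, (s i : ℝ) * ω i ≠ 0) (T : ℝ) (x₀ : UnitAddTorus d) :
    ‖flowAverage ω (mFourier s) T x₀‖ ≤ 2 / |2 * π * ∑ i, (s i : ℝ) * ω i| / |T| := by
  have ha : 2 * π * ∑ i, (s i : ℝ) * ω i ≠ 0 := mul_ne_zero (by positivity) hs
  have h_char : ‖mFourier s x₀‖ ≤ 1 := mFourier_norm.le.trans' ((mFourier s).norm_coe_le_norm x₀)
  simp only [flowAverage, mFourier_kroneckerFlow, intervalIntegral.integral_const_mul,
    norm_smul, norm_mul, norm_inv, Real.norm_eq_abs]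
  calc |T|⁻¹ * (‖mFourier s x₀‖ * ‖∫ t in (0:ℝ)..T,
        exp ((2 * π * ∑ i, (s i : ℝ) * ω i : ℝ) * I * t)‖)
      ≤ |T|⁻¹ * (1 * (2 / |2 * π * ∑ i, (s i : ℝ) * ω i|)) := by
        gcongr
        exact norm_integral_exp_mul_I_le ha T
    _ = 2 / |2 * π * ∑ i, (s i : ℝ) * ω i| / |T| := by ring

theorem mFourier_mem_equidistributedSubmodule {ω : d → ℝ} (hω : Nonresonant ω) (s : d → ℤ) :
    mFourier s ∈ equidistributedSubmodule ω := by
  refine Metric.tendstoUniformly_iff.mpr fun ε hε => ?_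
  rcases eq_or_ne s 0 with rfl | hs
  · filter_upwards [eventually_ne_atTop 0] with T hT x₀
    simpa [mFourier_zero, flowAverage, hT] using hε
  · have hC := (tendsto_const_nhds (x := 2 / |2 * π * ∑ i, (s i : ℝ) * ω i|)).div_atTop
      tendsto_id
    filter_upwards [eventually_gt_atTop 0, hC.eventually (gt_mem_nhds hε)] with T hT hTε x₀
    rw [integral_mFourier_of_ne_zero hs, dist_zero_left]
    exact (norm_flowAverage_mFourier_le (hω s hs) T x₀).trans_lt (by rwa [abs_of_pos hT])

theorem equidistributedSubmodule_eq_top {ω : d → ℝ} (hω : Nonresonant ω) :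
    equidistributedSubmodule ω = ⊤ := by
  rw [eq_top_iff, ← span_mFourier_closure_eq_top]
  exact Submodule.topologicalClosure_minimal _
    (Submodule.span_le.mpr (Set.range_subset_iff.mpr (mFourier_mem_equidistributedSubmodule hω)))
    (isClosed_equidistributedSubmodule ω)

theorem tendstoUniformly_flowAverage {ω : d → ℝ} (hω : Nonresonant ω) {f : UnitAddTorus d → ℝ}
    (hf : Continuous f) : TendstoUniformly (flowAverage ω f) (fun _ => ∫ x, f x) atTop := by
  have h : (⟨fun x => (f x : ℂ), by fun_prop⟩ : C(UnitAddTorus d, ℂ)) ∈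
      equidistributedSubmodule ω :=
    equidistributedSubmodule_eq_top hω ▸ Submodule.mem_top
  simpa [Function.comp_def, flowAverage_ofReal, integral_complex_ofReal] using
    reCLM.uniformContinuous.comp_tendstoUniformly h

end Torus

end

/-- Uniform-perturbation version of Weyl's theorem: for a Lipschitz function `f` on the torus
`T^n` and a non-resonant frequency vector `ω`, time averages of any continuous `g` uniformly
`δ/3`-close to `f` along the Kronecker flow are `δ`-close to the space average of `g`,
uniformly in the starting point, for all sufficiently large averaging times. -/
theorem weyl_uniform_perturbed (n : ℕ) (f : (Fin n → AddCircle (1:ℝ)) → ℝ)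
    (K : NNReal) (hf : LipschitzWith K f)
    (ω : Fin n → ℝ)
    (hω : ∀ s : Fin n → ℤ, s ≠ 0 → (∑ i, (s i : ℝ) * ω i) ≠ 0)
    (δ : ℝ) (hδ : 0 < δ) :
    ∃ T₀ : ℝ, 0 < T₀ ∧ ∀ T : ℝ, T₀ ≤ T →
      ∀ g : (Fin n → AddCircle (1:ℝ)) → ℝ, Continuous g →
        (∀ x, |g x - f x| ≤ δ / 3) →
        ∀ x₀ : Fin n → AddCircle (1:ℝ),
          |(1 / T) * (∫ t in (0:ℝ)..T, g (fun i => x₀ i + ((ω i * t : ℝ) : AddCircle (1:ℝ))))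
            - ∫ x, g x| ≤ δ := by
  obtain ⟨T₁, hT₁⟩ := eventually_atTop.mp <| Metric.tendstoUniformly_iff.mp
    (tendstoUniformly_flowAverage (ω := ω) hω hf.continuous) (δ / 3) (by positivity)
  refine ⟨max T₁ 1, by positivity, fun T hT g hg hgf x₀ => ?_⟩
  have h_avg := dist_flowAverage_le (ω := ω) hg hf.continuous hgf T x₀
  have h_mean := dist_integral_le_of_forall_dist_le (μ := volume)
    hf.continuous.integrable_of_compactSpace hg.integrable_of_compactSpace
    fun x => (dist_comm (f x) (g x)).trans_le (hgf x)
  have h_f := hT₁ T (le_of_max_le_left hT) x₀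
  calc |(1 / T) * (∫ t in (0:ℝ)..T, g (fun i => x₀ i + ((ω i * t : ℝ) : AddCircle (1:ℝ))))
        - ∫ x, g x|
      = dist (flowAverage ω g T x₀) (∫ x, g x) := by
        rw [Real.dist_eq, flowAverage, one_div, smul_eq_mul]; rfl
    _ ≤ dist (flowAverage ω g T x₀) (flowAverage ω f T x₀)
        + dist (flowAverage ω f T x₀) (∫ x, f x) + dist (∫ x, f x) (∫ x, g x) :=
      dist_triangle4 _ _ _ _
    _ ≤ δ := by linarith [dist_comm (flowAverage ω f T x₀) (∫ x, f x)]
end
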